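/- Let M ≤ P ≤ Q be subgroups with M normal in P and M abelian, let (μ : M → P) be the normal subgroup crossed module (inclusion with conjugation action), and let ι : P → Q be the inclusion. Suppose that M is normal in Q. Then for any induced crossed module (∂ : I → Q, j) of (μ : M → P) along ι, the group I is abelian, and I with its Q-action is isomorphic, as a module over the integral group ring ℤ[Q], to the induced module ℤ[Q] ⊗_{ℤ[P]} M. -/
import Mathlib


universe u

/-- A crossed module `(μ : M → P)`: groups `M`, `P`, a (right) action of `P` on `M` by
group automorphisms, written `act m p` for `m ^ p`, and a homomorphism `μ : M →* P`
satisfying CM1: `μ (m ^ p) = p⁻¹ * μ m * p` and CM2: `n ^ (μ m) = m⁻¹ * n * m`. -/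
structure CrossedModule (M P : Type u) [Group M] [Group P] where
  μ : M →* P
  act : M → P → M
  act_mul : ∀ m n p, act (m * n) p = act m p * act n p
  act_one : ∀ m, act m 1 = m
  act_act : ∀ m p q, act (act m p) q = act m (p * q)
  cm1 : ∀ m p, μ (act m p) = p⁻¹ * μ m * p
  cm2 : ∀ m n, act n (μ m) = m⁻¹ * n * m

/-- A morphism of crossed modules `(f, g) : (μ : M → P) → (ν : N → Q)`:
group homomorphisms `f : M → N`, `g : P → Q` with `ν ∘ f = g ∘ μ` and
`f (m ^ p) = (f m) ^ (g p)`. -/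
def CrossedModule.IsMorphism {M P N Q : Type u} [Group M] [Group P] [Group N] [Group Q]
    (X : CrossedModule M P) (Y : CrossedModule N Q) (f : M →* N) (g : P →* Q) : Prop :=
  (∀ m, Y.μ (f m) = g (X.μ m)) ∧ ∀ m p, f (X.act m p) = Y.act (f m) (g p)

/-- `(∂ : I → Q)` together with `j : M → I` is an induced crossed module of `(μ : M → P)`
along `ι : P → Q`: `(j, ι)` is a morphism of crossed modules, and for every crossed module
`(ν : N → Q)` and morphism `(f, ι) : (μ : M → P) → (ν : N → Q)` there is a unique group
homomorphism `φ : I → N` with `ν ∘ φ = ∂`, `φ (x ^ q) = (φ x) ^ q`, and `φ ∘ j = f`. -/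
def IsInducedCrossedModule {M P Q I : Type u} [Group M] [Group P] [Group Q] [Group I]
    (X : CrossedModule M P) (ι : P →* Q) (Y : CrossedModule I Q) (j : M →* I) : Prop :=
  CrossedModule.IsMorphism X Y j ι ∧
  ∀ (N : Type u) [Group N] (Z : CrossedModule N Q) (f : M →* N),
    CrossedModule.IsMorphism X Z f ι →
    ∃! φ : I →* N, (∀ x, Z.μ (φ x) = Y.μ x) ∧
      (∀ x q, φ (Y.act x q) = Z.act (φ x) q) ∧ ∀ m, φ (j m) = f m

/-- Let `M ≤ P ≤ Q` with `M` normal in `P`, `M` abelian and `M` normal in `Q`; let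
`(μ : M → P)` be the normal subgroup crossed module (inclusion with conjugation action) and
`ι : P → Q` the inclusion.  Then for any induced crossed module `(∂ : I → Q, j)` of
`(μ : M → P)` along `ι`, the group `I` is abelian, and `I` with its `Q`-action is the
`ℤ[Q]`-module induced from the `ℤ[P]`-module `M`.  (Since `ℤ[P]` is in general
noncommutative, the statement "`I ≅ ℤ[Q] ⊗_{ℤ[P]} M` as `ℤ[Q]`-modules" is expressed here
by the universal property characterising the induced module `ℤ[Q] ⊗_{ℤ[P]} M` together with
its canonical `P`-equivariant map from `M`, the latter being `j`: for every abelian group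
`B` with a right `Q`-action by automorphisms (i.e. every `ℤ[Q]`-module) and every
`P`-equivariant homomorphism `f : M → B`, there is a unique `Q`-equivariant homomorphism
`φ : I → B` with `φ ∘ j = f`.) -/
theorem induced_of_abelian_normal {Q : Type u} [Group Q] (M P : Subgroup Q)
    (hMP : M ≤ P)
    (hMnormalP : ∀ p ∈ P, ∀ m ∈ M, p⁻¹ * m * p ∈ M)
    (habelian : ∀ a b : M, a * b = b * a)
    (hMQ : M.Normal)
    (X : CrossedModule ↥M ↥P)
    (hXμ : ∀ m : M, (X.μ m : Q) = (m : Q))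
    (hXact : ∀ (m : M) (p : P), ((X.act m p : ↥M) : Q) = (p : Q)⁻¹ * (m : Q) * (p : Q))
    {I : Type u} [Group I] (Y : CrossedModule I Q) (j : ↥M →* I)
    (hInd : IsInducedCrossedModule X P.subtype Y j) :
    (∀ a b : I, a * b = b * a) ∧
    ∀ (B : Type u) [CommGroup B] (β : B → Q → B),
      (∀ b c q, β (b * c) q = β b q * β c q) →
      (∀ b, β b 1 = b) →
      (∀ b q r, β (β b q) r = β b (q * r)) →
      ∀ f : ↥M →* B, (∀ (m : ↥M) (p : ↥P), f (X.act m p) = β (f m) (p : Q)) →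
        ∃! φ : I →* B, (∀ x q, φ (Y.act x q) = β (φ x) q) ∧ ∀ m, φ (j m) = f m := by
  
  classical
  obtain ⟨⟨hjμ, hjact⟩, huniv⟩ := hInd
  -- μ of j, as an element of Q
  have hμj : ∀ m : ↥M, Y.μ (j m) = (m : Q) := by
    intro m; rw [hjμ m]; simpa using hXμ m
  -- Y.act 1 q = 1
  have hY1 : ∀ q : Q, Y.act 1 q = 1 := by
    intro q
    have h := Y.act_mul 1 1 q
    rw [one_mul] at h
    exact (left_eq_mul.mp h)
  -- conjugation inside M is trivial
  have hMtriv : ∀ (m : ↥M) (n : Q), n ∈ M → n⁻¹ * (m : Q) * n = (m : Q) := by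
    intro m n hn
    have h := congrArg (Subtype.val) (habelian ⟨n, hn⟩ m)
    push_cast at h
    rw [mul_assoc, ← h, ← mul_assoc, inv_mul_cancel, one_mul]
  have hXactM : ∀ (m : ↥M) (p : ↥P), (p : Q) ∈ M → X.act m p = m := by
    intro m p hp
    exact Subtype.ext (by rw [hXact]; exact hMtriv m p hp)
  have hconjM : ∀ (n : Q), n ∈ M → ∀ q : Q, q⁻¹ * n * q ∈ M := by
    intro n hn q
    simpa using hMQ.conj_mem n hn q⁻¹
  -- key absorption lemma
  have hK : ∀ (m : ↥M) (q n : Q), n ∈ M → Y.act (j m) (q * n) = Y.act (j m) q := by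
    intro m q n hn
    have hmem : q * n * q⁻¹ ∈ M := hMQ.conj_mem n hn q
    have hP : q * n * q⁻¹ ∈ P := hMP hmem
    have hqn : q * n = (q * n * q⁻¹) * q := by group
    have h1 : j (X.act m ⟨q * n * q⁻¹, hP⟩) = Y.act (j m) (q * n * q⁻¹) :=
      hjact m ⟨q * n * q⁻¹, hP⟩
    rw [hqn, ← Y.act_act, ← h1, hXactM m ⟨q * n * q⁻¹, hP⟩ hmem]
  -- the generating set
  set S : Set I := {x | ∃ (m : ↥M) (q : Q), x = Y.act (j m) q} with hS
  set I₀ : Subgroup I := Subgroup.closure S with hI₀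
  have hjS : ∀ m : ↥M, j m ∈ S := fun m => ⟨m, 1, (Y.act_one (j m)).symm⟩
  have hjI₀ : ∀ m : ↥M, j m ∈ I₀ := fun m => Subgroup.subset_closure (hjS m)
  -- I₀ is stable under the action
  have hYhom : ∀ q : Q, ∃ g : I →* I, ∀ x, g x = Y.act x q := by
    intro q
    exact ⟨⟨⟨fun x => Y.act x q, hY1 q⟩, fun a b => Y.act_mul a b q⟩, fun x => rfl⟩
  have hstabI : ∀ x ∈ I₀, ∀ q, Y.act x q ∈ I₀ := by
    intro x hx q
    obtain ⟨g, hg⟩ := hYhom q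
    have hle : I₀ ≤ I₀.comap g := by
      rw [hI₀, Subgroup.closure_le]
      intro y hy
      obtain ⟨m, r, rfl⟩ := hy
      have : g (Y.act (j m) r) ∈ S := ⟨m, r * q, by rw [hg, Y.act_act]⟩
      exact Subgroup.subset_closure this
    have := hle hx
    rw [Subgroup.mem_comap, hg] at this
    exact this
  -- elements of S pairwise "commute" via conjugation
  have hconjS : ∀ x ∈ S, ∀ y ∈ S, y⁻¹ * x * y = x := by
    rintro x ⟨m, q, rfl⟩ y ⟨m', q', rfl⟩
    have hμy : Y.μ (Y.act (j m') q') = q'⁻¹ * (m' : Q) * q' := by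
      rw [Y.cm1, hμj]
    have hμyM : Y.μ (Y.act (j m') q') ∈ M := by
      rw [hμy]; exact hconjM _ m'.2 q'
    rw [← Y.cm2 (Y.act (j m') q') (Y.act (j m) q), Y.act_act]
    exact hK m q _ hμyM
  -- the crossed module structure on I₀
  have hactI₀mul : ∀ (a b : ↥I₀) (q : Q), Y.act ((a*b : ↥I₀) : I) q = Y.act (a : I) q * Y.act (b : I) q := by
    intro a b q; push_cast; rw [Y.act_mul]
  let ZI : CrossedModule ↥I₀ Q :=
    { μ := Y.μ.comp I₀.subtype
      act := fun x q => ⟨Y.act (x : I) q, hstabI x x.2 q⟩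
      act_mul := fun a b q => Subtype.ext (hactI₀mul a b q)
      act_one := fun a => Subtype.ext (Y.act_one (a : I))
      act_act := fun a p q => Subtype.ext (Y.act_act (a : I) p q)
      cm1 := fun a p => Y.cm1 (a : I) p
      cm2 := fun a b => Subtype.ext (by push_cast; exact Y.cm2 (a : I) (b : I)) }
  let jI : ↥M →* ↥I₀ := j.codRestrict I₀ hjI₀
  have hmorI : CrossedModule.IsMorphism X ZI jI P.subtype := by
    constructor
    · intro m; exact hjμ m
    · intro m p; exact Subtype.ext (hjact m p)
  obtain ⟨Φ₀, ⟨hΦ₀μ, hΦ₀act, hΦ₀j⟩, _⟩ := huniv ↥I₀ ZI jI hmorI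
  obtain ⟨ΦI, _, hIu⟩ := huniv I Y j ⟨hjμ, hjact⟩
  have h1 : I₀.subtype.comp Φ₀ = ΦI := by
    apply hIu
    refine ⟨fun x => hΦ₀μ x, fun x q => ?_, fun m => congrArg Subtype.val (hΦ₀j m)⟩
    exact congrArg Subtype.val (hΦ₀act x q)
  have h2 : MonoidHom.id I = ΦI := hIu _ ⟨fun x => by simp, fun x q => by simp, fun m => by simp⟩
  have htop : ∀ x : I, x ∈ I₀ := by
    intro x
    have h3 : ((Φ₀ x : ↥I₀) : I) = x := by
      have := congrArg (fun g : I →* I => g x) (h1.trans h2.symm)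
      simpa using this
    rw [← h3]; exact (Φ₀ x).2
  -- commutativity
  have hcommS : ∀ x ∈ S, ∀ y ∈ S, y * x = x * y := by
    intro x hx y hy
    have h := hconjS x hx y hy
    have h2 : y * (y⁻¹ * x * y) = y * x := by rw [h]
    rw [← h2]; group
  have hcomm : ∀ a b : I, a * b = b * a := by
    have step2 : ∀ y ∈ S, ∀ a ∈ I₀, y * a = a * y := by
      intro y hy a ha
      have hle : I₀ ≤ Subgroup.centralizer {y} := by
        rw [hI₀, Subgroup.closure_le]
        intro x hx
        rw [SetLike.mem_coe, Subgroup.mem_centralizer_iff]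
        intro g hg
        rw [Set.mem_singleton_iff] at hg
        rw [hg]
        exact hcommS x hx y hy
      exact Subgroup.mem_centralizer_iff.mp (hle ha) y rfl
    intro a b
    have hle : I₀ ≤ Subgroup.centralizer {a} := by
      rw [hI₀, Subgroup.closure_le]
      intro x hx
      rw [SetLike.mem_coe, Subgroup.mem_centralizer_iff]
      intro g hg
      rw [Set.mem_singleton_iff] at hg
      rw [hg]
      exact (step2 x hx a (htop a)).symm
    exact Subgroup.mem_centralizer_iff.mp (hle (htop b)) a rfl
  refine ⟨hcomm, ?_⟩
  intro B _ β hβmul hβone hβact f hf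
  -- the Q-submodule of B generated by the image of f
  have hβ1 : ∀ q : Q, β 1 q = 1 := by
    intro q
    have h := hβmul 1 1 q
    rw [one_mul] at h
    exact (left_eq_mul.mp h)
  set SB : Set B := {b | ∃ (m : ↥M) (q : Q), b = β (f m) q} with hSB
  set B₀ : Subgroup B := Subgroup.closure SB with hB₀
  have hfSB : ∀ m : ↥M, f m ∈ SB := fun m => ⟨m, 1, (hβone (f m)).symm⟩
  have hfB₀ : ∀ m : ↥M, f m ∈ B₀ := fun m => Subgroup.subset_closure (hfSB m)
  have hstabB : ∀ b ∈ B₀, ∀ q, β b q ∈ B₀ := by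
    intro b hb q
    have hle : B₀ ≤ B₀.comap (⟨⟨fun x => β x q, hβ1 q⟩, fun a c => hβmul a c q⟩ : B →* B) := by
      rw [hB₀, Subgroup.closure_le]
      intro y hy
      obtain ⟨m, r, rfl⟩ := hy
      refine Subgroup.subset_closure ⟨m, r * q, ?_⟩
      show β (β (f m) r) q = β (f m) (r * q)
      exact hβact (f m) r q
    exact hle hb
  -- key: M acts trivially on B₀
  have hKβ : ∀ (m : ↥M) (q n : Q), n ∈ M → β (f m) (q * n) = β (f m) q := by
    intro m q n hn
    have hmem : q * n * q⁻¹ ∈ M := hMQ.conj_mem n hn q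
    have hP : q * n * q⁻¹ ∈ P := hMP hmem
    have hqn : q * n = (q * n * q⁻¹) * q := by group
    have h1 : f (X.act m ⟨q * n * q⁻¹, hP⟩) = β (f m) (q * n * q⁻¹) := hf m ⟨q * n * q⁻¹, hP⟩
    rw [hqn, ← hβact, ← h1, hXactM m ⟨q * n * q⁻¹, hP⟩ hmem]
  have hBtriv : ∀ b ∈ B₀, ∀ (n : Q), n ∈ M → β b n = b := by
    intro b hb n hn
    set T : Subgroup B :=
      { carrier := {b | β b n = b}
        one_mem' := hβ1 n
        mul_mem' := by intro a c ha hc; show β (a*c) n = a*c; rw [hβmul, ha, hc]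
        inv_mem' := by
          intro a ha
          show β a⁻¹ n = a⁻¹
          have : β a⁻¹ n * β a n = 1 := by rw [← hβmul, inv_mul_cancel, hβ1]
          have ha' : β a n = a := ha
          rw [ha'] at this
          exact eq_inv_of_mul_eq_one_left this } with hT
    have hle : B₀ ≤ T := by
      rw [hB₀, Subgroup.closure_le]
      rintro x ⟨m, r, rfl⟩
      show β (β (f m) r) n = β (f m) r
      rw [hβact]
      exact hKβ m r n hn
    exact hle hb
  -- the target crossed module N = B₀ × M
  let N : Type u := ↥B₀ × ↥M
  let ZB : CrossedModule N Q :=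
    { μ := M.subtype.comp (MonoidHom.snd ↥B₀ ↥M)
      act := fun x q => (⟨β (x.1 : B) q, hstabB x.1 x.1.2 q⟩,
                         ⟨q⁻¹ * (x.2 : Q) * q, hconjM _ x.2.2 q⟩)
      act_mul := by
        intro a b q
        refine Prod.ext (Subtype.ext ?_) (Subtype.ext ?_)
        · show β ((a.1 * b.1 : ↥B₀) : B) q = β (a.1 : B) q * β (b.1 : B) q
          push_cast; rw [hβmul]
        · show q⁻¹ * ((a.2 * b.2 : ↥M) : Q) * q = (q⁻¹ * (a.2 : Q) * q) * (q⁻¹ * (b.2 : Q) * q)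
          push_cast; group
      act_one := by
        intro a
        refine Prod.ext (Subtype.ext ?_) (Subtype.ext ?_)
        · exact hβone (a.1 : B)
        · show 1⁻¹ * (a.2 : Q) * 1 = (a.2 : Q); group
      act_act := by
        intro a p q
        refine Prod.ext (Subtype.ext ?_) (Subtype.ext ?_)
        · exact hβact (a.1 : B) p q
        · show q⁻¹ * (p⁻¹ * (a.2 : Q) * p) * q = (p*q)⁻¹ * (a.2 : Q) * (p*q); group
      cm1 := fun a q => rfl
      cm2 := by
        intro a b
        refine Prod.ext (Subtype.ext ?_) (Subtype.ext ?_)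
        · show β (b.1 : B) ((a.2 : ↥M) : Q) = (((a.1⁻¹ * b.1 * a.1 : ↥B₀)) : B)
          rw [hBtriv (b.1 : B) b.1.2 _ a.2.2]
          push_cast
          rw [mul_comm ((a.1 : B)⁻¹) (b.1 : B), mul_assoc, inv_mul_cancel, mul_one]
        · show ((a.2 : ↥M) : Q)⁻¹ * ((b.2 : ↥M) : Q) * ((a.2 : ↥M) : Q) = ((a.2⁻¹ * b.2 * a.2 : ↥M) : Q)
          push_cast; rfl }
  let F : ↥M →* N :=
    { toFun := fun m => (⟨f m, hfB₀ m⟩, m)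
      map_one' := by
        refine Prod.ext (Subtype.ext ?_) rfl
        exact map_one f
      map_mul' := by
        intro a b
        refine Prod.ext (Subtype.ext ?_) rfl
        exact map_mul f a b }
  have hmorB : CrossedModule.IsMorphism X ZB F P.subtype := by
    constructor
    · intro m
      show (m : Q) = ((X.μ m : ↥P) : Q)
      exact (hXμ m).symm
    · intro m p
      refine Prod.ext (Subtype.ext ?_) (Subtype.ext ?_)
      · exact hf m p
      · exact hXact m p
  obtain ⟨Φ, ⟨hΦμ, hΦact, hΦj⟩, _⟩ := huniv N ZB F hmorB
  refine ⟨B₀.subtype.comp ((MonoidHom.fst ↥B₀ ↥M).comp Φ), ⟨?_, ?_⟩, ?_⟩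
  · intro x q
    show ((Φ (Y.act x q)).1 : B) = β ((Φ x).1 : B) q
    rw [hΦact x q]
  · intro m
    show ((Φ (j m)).1 : B) = f m
    rw [hΦj m]
    rfl
  · intro φ' ⟨hφ'act, hφ'j⟩
    ext x
    show φ' x = ((Φ x).1 : B)
    have hgen : ∀ y ∈ S, φ' y = ((Φ y).1 : B) := by
      rintro y ⟨m, q, rfl⟩
      rw [hφ'act, hφ'j, hΦact, hΦj]
      rfl
    refine Subgroup.closure_induction (k := S)
      (p := fun y _ => φ' y = ((Φ y).1 : B)) (fun y hy => hgen y hy) ?_ ?_ ?_ (htop x)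
    · simp
    · intro a b _ _ ha hb
      rw [map_mul, ha, hb, map_mul]
      rfl
    · intro a _ ha
      rw [map_inv, ha, map_inv]
      rfl
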